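/- Let 𝒢 be a torsion class in mod-Λ and θ a stability condition. Define 𝒲(θ) as the class of X ∈ 𝒢 with θ(X) = 0 and θ(X′) ≤ 0 for all strict subobjects X′ of X. Then 𝒲(θ) is a pseudo-wide subcategory of 𝒢: it contains the kernel, image, and cokernel of every strict morphism between its objects, and is closed under extensions (in particular strict extensions). -/

import Mathlib

/-!
Common framework: a torsion class `𝒢` in `mod-Λ` is modelled as a predicate
`G : ModuleCat R → Prop` (closed under isomorphism, quotients and extensions).
Strict subobjects, fibrations, cofibrations, strict morphisms, pseudo-torsion
classes etc. follow the definitions of the paper.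
-/

namespace PaperTC

variable {R : Type} [Ring R]

/-- Membership of a (type-level) module in a class of modules. -/
def Mem (G : ModuleCat.{0} R → Prop) (M : Type) [AddCommGroup M] [Module R M] : Prop :=
  G (ModuleCat.of R M)

/-- `A` is a strict subobject of `M` (w.r.t. the torsion class `G`):
`A` lies in `G` and `A ⊓ B'` lies in `G` for every subobject `B'` of `M`. -/
def IsStrictSub (G : ModuleCat.{0} R → Prop) {M : Type} [AddCommGroup M] [Module R M]
    (A : Submodule R M) : Prop :=
  Mem G ↥A ∧ ∀ B' : Submodule R M, Mem G ↥B' → Mem G ↥(A ⊓ B')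

/-- A fibration is a surjection whose kernel is a strict subobject of the source. -/
def IsFibration (G : ModuleCat.{0} R → Prop) {M N : Type} [AddCommGroup M] [Module R M]
    [AddCommGroup N] [Module R N] (f : M →ₗ[R] N) : Prop :=
  Function.Surjective f ∧ IsStrictSub G (LinearMap.ker f)

/-- A strict morphism: kernel is a strict subobject of the source and image a
strict subobject of the target. -/
def IsStrictMorphism (G : ModuleCat.{0} R → Prop) {M N : Type} [AddCommGroup M] [Module R M]
    [AddCommGroup N] [Module R N] (f : M →ₗ[R] N) : Prop :=
  IsStrictSub G (LinearMap.ker f) ∧ IsStrictSub G (LinearMap.range f)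

/-- `G` is a torsion class in `mod-Λ`. -/
structure IsTorsionClass (G : ModuleCat.{0} R → Prop) : Prop where
  iso_closed : ∀ (M N : Type) [AddCommGroup M] [Module R M] [AddCommGroup N] [Module R N],
      (M ≃ₗ[R] N) → Mem G M → Mem G N
  zero_mem : ∀ (M : Type) [AddCommGroup M] [Module R M], Subsingleton M → Mem G M
  quot_closed : ∀ (M : Type) [AddCommGroup M] [Module R M] (N : Submodule R M),
      Mem G M → Mem G (M ⧸ N)
  ext_closed : ∀ (A B C : Type) [AddCommGroup A] [Module R A] [AddCommGroup B] [Module R B]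
      [AddCommGroup C] [Module R C] (f : A →ₗ[R] B) (g : B →ₗ[R] C),
      Function.Injective f → Function.Surjective g →
      LinearMap.range f = LinearMap.ker g → Mem G A → Mem G C → Mem G B

/-- A pseudo-torsion class `P` in the torsion class `G`: nonempty (contains zero
objects), closed under strict quotients and under strict extensions. -/
structure IsPseudoTorsionClass (G P : ModuleCat.{0} R → Prop) : Prop where
  subset : ∀ M : ModuleCat.{0} R, P M → G M
  zero_mem : ∀ (M : Type) [AddCommGroup M] [Module R M], Subsingleton M → Mem G M → Mem P M
  quot_closed : ∀ (M : Type) [AddCommGroup M] [Module R M] (A : Submodule R M),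
      IsStrictSub G A → Mem P M → Mem P (M ⧸ A)
  ext_closed : ∀ (A B C : Type) [AddCommGroup A] [Module R A] [AddCommGroup B] [Module R B]
      [AddCommGroup C] [Module R C] (f : A →ₗ[R] B) (g : B →ₗ[R] C),
      Function.Injective f → Function.Surjective g →
      LinearMap.range f = LinearMap.ker g → IsStrictSub G (LinearMap.range f) →
      Mem P A → Mem P C → Mem P B

/-- A pseudo-torsionfree class `Q` in the torsion class `G`. -/
structure IsPseudoTorsionFreeClass (G Q : ModuleCat.{0} R → Prop) : Prop where
  subset : ∀ M : ModuleCat.{0} R, Q M → G M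
  zero_mem : ∀ (M : Type) [AddCommGroup M] [Module R M], Subsingleton M → Mem G M → Mem Q M
  sub_closed : ∀ (M : Type) [AddCommGroup M] [Module R M] (A : Submodule R M),
      IsStrictSub G A → Mem Q M → Mem Q ↥A
  ext_closed : ∀ (A B C : Type) [AddCommGroup A] [Module R A] [AddCommGroup B] [Module R B]
      [AddCommGroup C] [Module R C] (f : A →ₗ[R] B) (g : B →ₗ[R] C),
      Function.Injective f → Function.Surjective g →
      LinearMap.range f = LinearMap.ker g → IsStrictSub G (LinearMap.range f) →
      Mem Q A → Mem Q C → Mem Q B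

/-- `Y` lies in the right perpendicular class `X ⟂`: no nonzero strict morphism
from an object of `X` to `Y`. -/
def MemRightPerp (G X : ModuleCat.{0} R → Prop) (Y : Type) [AddCommGroup Y] [Module R Y] : Prop :=
  Mem G Y ∧ ∀ M : ModuleCat.{0} R, X M → ∀ f : M →ₗ[R] Y, IsStrictMorphism G f → f = 0

/-- `M` lies in the left perpendicular class `⟂ Y`. -/
def MemLeftPerp (G Y : ModuleCat.{0} R → Prop) (M : Type) [AddCommGroup M] [Module R M] : Prop :=
  Mem G M ∧ ∀ N : ModuleCat.{0} R, Y N → ∀ f : M →ₗ[R] N, IsStrictMorphism G f → f = 0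

/-- A pseudo-wide subcategory `W` of `G`. -/
structure IsPseudoWide (G W : ModuleCat.{0} R → Prop) : Prop where
  subset : ∀ M : ModuleCat.{0} R, W M → G M
  zero_mem : ∀ (M : Type) [AddCommGroup M] [Module R M], Subsingleton M → Mem G M → Mem W M
  kic : ∀ (A B : Type) [AddCommGroup A] [Module R A] [AddCommGroup B] [Module R B],
      Mem W A → Mem W B → ∀ f : A →ₗ[R] B, IsStrictMorphism G f →
      Mem W ↥(LinearMap.ker f) ∧ Mem W ↥(LinearMap.range f) ∧
        Mem W (B ⧸ LinearMap.range f)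
  ext_closed : ∀ (A B C : Type) [AddCommGroup A] [Module R A] [AddCommGroup B] [Module R B]
      [AddCommGroup C] [Module R C] (f : A →ₗ[R] B) (g : B →ₗ[R] C),
      Function.Injective f → Function.Surjective g →
      LinearMap.range f = LinearMap.ker g → IsStrictSub G (LinearMap.range f) →
      Mem W A → Mem W C → Mem W B

/-- A stability condition: a real-valued function on modules, invariant under
isomorphism and additive on short exact sequences of finitely generated modules
(this is exactly a functional on `K₀Λ` applied to dimension vectors). -/
structure StabilityCondition (R : Type) [Ring R] : Type 1 where
  val : ModuleCat.{0} R → ℝ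
  iso_inv : ∀ (M N : ModuleCat.{0} R), (↥M ≃ₗ[R] ↥N) → val M = val N
  additive : ∀ (M : ModuleCat.{0} R), Module.Finite R ↥M → ∀ A : Submodule R ↥M,
      val (ModuleCat.of R ↥A) + val (ModuleCat.of R (↥M ⧸ A)) = val M

/-- The value `θ(M)` of a stability condition on a module. -/
def StabilityCondition.app (θ : StabilityCondition R) (M : Type) [AddCommGroup M]
    [Module R M] : ℝ :=
  θ.val (ModuleCat.of R M)

/-- `𝒫(θ)`: objects which are zero, or on which `θ` is positive together with
all nonzero strict quotients. -/
def memP (G : ModuleCat.{0} R → Prop) (θ : StabilityCondition R)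
    (M : Type) [AddCommGroup M] [Module R M] : Prop :=
  Mem G M ∧ (Subsingleton M ∨ (0 < θ.app M ∧
    ∀ A : Submodule R M, IsStrictSub G A → A ≠ ⊤ → 0 < θ.app (M ⧸ A)))

/-- `𝒫̄(θ)`: `θ` is nonnegative on the object and all its strict quotients. -/
def memPbar (G : ModuleCat.{0} R → Prop) (θ : StabilityCondition R)
    (M : Type) [AddCommGroup M] [Module R M] : Prop :=
  Mem G M ∧ 0 ≤ θ.app M ∧ ∀ A : Submodule R M, IsStrictSub G A → 0 ≤ θ.app (M ⧸ A)

/-- `𝒬(θ)`: objects which are zero, or on which `θ` is negative together with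
all nonzero strict subobjects. -/
def memQ (G : ModuleCat.{0} R → Prop) (θ : StabilityCondition R)
    (M : Type) [AddCommGroup M] [Module R M] : Prop :=
  Mem G M ∧ (Subsingleton M ∨ (θ.app M < 0 ∧
    ∀ A : Submodule R M, IsStrictSub G A → A ≠ ⊥ → θ.app ↥A < 0))

/-- `𝒬̄(θ)`: `θ` is nonpositive on the object and all its strict subobjects. -/
def memQbar (G : ModuleCat.{0} R → Prop) (θ : StabilityCondition R)
    (M : Type) [AddCommGroup M] [Module R M] : Prop :=
  Mem G M ∧ θ.app M ≤ 0 ∧ ∀ A : Submodule R M, IsStrictSub G A → θ.app ↥A ≤ 0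

/-- `𝒲(θ)`: θ-semistable objects of `G`; equivalently `θ ∈ D_𝒢(M)`. -/
def memW (G : ModuleCat.{0} R → Prop) (θ : StabilityCondition R)
    (M : Type) [AddCommGroup M] [Module R M] : Prop :=
  Mem G M ∧ θ.app M = 0 ∧ ∀ A : Submodule R M, IsStrictSub G A → θ.app ↥A ≤ 0

/-- `𝒲₀(θ)`: objects of `𝒲(θ)` with no proper nonzero strict subobject in `𝒲(θ)`. -/
def memW0 (G : ModuleCat.{0} R → Prop) (θ : StabilityCondition R)
    (M : Type) [AddCommGroup M] [Module R M] : Prop :=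
  memW G θ M ∧ ∀ A : Submodule R M, IsStrictSub G A → memW G θ ↥A → A = ⊥ ∨ A = ⊤

/-- The linear path `θ_t = t·θ₁ + (1-t)·θ₀` in the stability space. -/
def lineSeg (θ₀ θ₁ : StabilityCondition R) (t : ℝ) : StabilityCondition R where
  val M := t * θ₁.val M + (1 - t) * θ₀.val M
  iso_inv M N e := by (try simp only []); rw [θ₁.iso_inv M N e, θ₀.iso_inv M N e]
  additive M hM A := by
    have h1 := θ₁.additive M hM A
    have h0 := θ₀.additive M hM A
    try simp only []
    linear_combination t * h1 + (1 - t) * h0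

/-- A smooth green path in the stability space. -/
structure IsGreenPath (G : ModuleCat.{0} R → Prop) (θ : ℝ → StabilityCondition R) : Prop where
  smooth : ∀ M : ModuleCat.{0} R, ContDiff ℝ (⊤ : ℕ∞) fun t => (θ t).val M
  green : ∀ (t : ℝ) (M : ModuleCat.{0} R), ¬Subsingleton ↥M → memW G (θ t) ↥M →
      0 < deriv (fun s => (θ s).val M) t
  eventually_pos : ∃ T : ℝ, ∀ t : ℝ, T < t → ∀ M : ModuleCat.{0} R, G M →
      ¬Subsingleton ↥M → 0 < (θ t).val M
  eventually_neg : ∃ T : ℝ, ∀ t : ℝ, t < T → ∀ M : ModuleCat.{0} R, G M →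
      ¬Subsingleton ↥M → (θ t).val M < 0

/-- A filtration `M = c 0 ⊃ c 1 ⊃ ⋯ ⊃ c m = 0` by strict subobjects whose
subquotients `c k / c (k+1)` lie in the slices `W (t k)` with `t` strictly
decreasing. -/
def IsSliceFiltration (G : ModuleCat.{0} R → Prop) {S : Type} [Preorder S]
    (W : S → ModuleCat.{0} R → Prop) {M : Type} [AddCommGroup M] [Module R M]
    (m : ℕ) (t : Fin m → S) (c : Fin (m + 1) → Submodule R M) : Prop :=
  c 0 = ⊤ ∧ c (Fin.last m) = ⊥ ∧ StrictAnti c ∧ StrictAnti t ∧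
  (∀ i, IsStrictSub G (c i)) ∧
  ∀ k : Fin m, W (t k) (ModuleCat.of R
    (↥(c k.castSucc) ⧸ Submodule.comap (c k.castSucc).subtype (c k.succ)))

/-- A strict HN-stratification of `G`: slices are pseudo-wide subcategories
indexed by a totally ordered set, with no nonzero strict morphisms backwards,
such that every object of `G` has a strict filtration with subquotients in
decreasing slices. -/
structure IsHNStratification (G : ModuleCat.{0} R → Prop) {S : Type} [LinearOrder S]
    (W : S → ModuleCat.{0} R → Prop) : Prop where
  wide : ∀ s : S, IsPseudoWide G (W s)
  no_backward : ∀ s₀ s₁ : S, s₀ < s₁ → ∀ X Y : ModuleCat.{0} R, W s₀ X → W s₁ Y →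
      ∀ f : X →ₗ[R] Y, IsStrictMorphism G f → f = 0
  filt : ∀ M : ModuleCat.{0} R, G M → ∃ (m : ℕ) (t : Fin m → S)
      (c : Fin (m + 1) → Submodule R ↥M), IsSliceFiltration G W m t c

section AuxHelpers

variable {G : ModuleCat.{0} R → Prop} (θ : StabilityCondition R)

theorem app_congr {M N : Type} [AddCommGroup M] [Module R M] [AddCommGroup N] [Module R N]
    (e : M ≃ₗ[R] N) : θ.app M = θ.app N :=
  θ.iso_inv (ModuleCat.of R M) (ModuleCat.of R N) e

theorem app_add {M : Type} [AddCommGroup M] [Module R M] [hfin : Module.Finite R M]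
    (A : Submodule R M) : θ.app ↥A + θ.app (M ⧸ A) = θ.app M :=
  θ.additive (ModuleCat.of R M) hfin A

theorem app_subsingleton {M : Type} [AddCommGroup M] [Module R M] [Subsingleton M] :
    θ.app M = 0 := by
  have hfin : Module.Finite R M :=
    Module.Finite.equiv (LinearEquiv.ofSubsingleton (⊥ : Submodule R M) M)
  have h := app_add θ (⊥ : Submodule R M)
  have e1 : θ.app ↥(⊥ : Submodule R M) = θ.app M :=
    app_congr θ (LinearEquiv.ofSubsingleton _ _)
  have hq : Subsingleton (M ⧸ (⊥ : Submodule R M)) :=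
    (Submodule.mkQ_surjective _).subsingleton
  have e2 : θ.app (M ⧸ (⊥ : Submodule R M)) = θ.app M :=
    app_congr θ (LinearEquiv.ofSubsingleton _ _)
  linarith

theorem mem_congr (hG : IsTorsionClass G) {M N : Type} [AddCommGroup M] [Module R M]
    [AddCommGroup N] [Module R N] (e : M ≃ₗ[R] N) (h : Mem G M) : Mem G N :=
  hG.iso_closed M N e h

/-- `X ⧸ (X ∩ ker π) ≃ π(X)`. -/
noncomputable def quotEquivMap {B C : Type} [AddCommGroup B] [Module R B] [AddCommGroup C]
    [Module R C] (π : B →ₗ[R] C) (X : Submodule R B) :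
    (↥X ⧸ Submodule.comap X.subtype (LinearMap.ker π)) ≃ₗ[R] ↥(X.map π) :=
  (Submodule.quotEquivOfEq _ _ (LinearMap.ker_comp X.subtype π).symm).trans
    ((LinearMap.quotKerEquivRange (π.comp X.subtype)).trans
      (LinearEquiv.ofEq _ _ (by rw [LinearMap.range_comp, Submodule.range_subtype])))

theorem mem_map (hG : IsTorsionClass G) {M N : Type} [AddCommGroup M] [Module R M]
    [AddCommGroup N] [Module R N] (f : M →ₗ[R] N) (X : Submodule R M) (h : Mem G ↥X) :
    Mem G ↥(X.map f) :=
  mem_congr hG (quotEquivMap f X) (hG.quot_closed ↥X _ h)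

/-- `(X ∩ ker π)` as a submodule of `X` is isomorphic to `X ⊓ ker π`. -/
noncomputable def infKerEquiv {B C : Type} [AddCommGroup B] [Module R B] [AddCommGroup C]
    [Module R C] (π : B →ₗ[R] C) (X : Submodule R B) :
    ↥(Submodule.comap X.subtype (LinearMap.ker π)) ≃ₗ[R] ↥(X ⊓ LinearMap.ker π) :=
  (Submodule.equivMapOfInjective X.subtype X.injective_subtype _).trans
    (LinearEquiv.ofEq _ _ (Submodule.map_comap_subtype _ _))

theorem app_restrict {B C : Type} [AddCommGroup B] [Module R B] [AddCommGroup C]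
    [Module R C] (π : B →ₗ[R] C) (X : Submodule R B) [Module.Finite R ↥X] :
    θ.app ↥(X ⊓ LinearMap.ker π) + θ.app ↥(X.map π) = θ.app ↥X := by
  have h := app_add θ (Submodule.comap X.subtype (LinearMap.ker π))
  rw [app_congr θ (quotEquivMap π X)] at h
  rw [← app_congr θ (infKerEquiv π X)]
  exact h

theorem app_ker_range {M N : Type} [AddCommGroup M] [Module R M] [AddCommGroup N]
    [Module R N] (f : M →ₗ[R] N) [Module.Finite R M] :
    θ.app ↥(LinearMap.ker f) + θ.app ↥(LinearMap.range f) = θ.app M := by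
  have h := app_add θ (LinearMap.ker f)
  rw [app_congr θ (LinearMap.quotKerEquivRange f)] at h
  exact h

theorem mem_of_inf_ker (hG : IsTorsionClass G) {B C : Type} [AddCommGroup B] [Module R B]
    [AddCommGroup C] [Module R C] (π : B →ₗ[R] C) (X : Submodule R B)
    (h1 : Mem G ↥(X ⊓ LinearMap.ker π)) (h2 : Mem G ↥(X.map π)) : Mem G ↥X := by
  set K := Submodule.comap X.subtype (LinearMap.ker π) with hK
  have h1' : Mem G ↥K := mem_congr hG (infKerEquiv π X).symm h1
  have h2' : Mem G (↥X ⧸ K) := mem_congr hG (quotEquivMap π X).symm h2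
  exact hG.ext_closed ↥K ↥X (↥X ⧸ K) K.subtype K.mkQ K.injective_subtype
    (Submodule.mkQ_surjective K)
    (by rw [Submodule.range_subtype, Submodule.ker_mkQ]) h1' h2'

theorem map_inf_comap {B C : Type} [AddCommGroup B] [Module R B] [AddCommGroup C]
    [Module R C] (π : B →ₗ[R] C) (A' : Submodule R C) (B' : Submodule R B) :
    (Submodule.comap π A' ⊓ B').map π = A' ⊓ B'.map π := by
  ext c
  simp only [Submodule.mem_map, Submodule.mem_inf, Submodule.mem_comap]
  constructor
  · rintro ⟨b, ⟨hb1, hb2⟩, rfl⟩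
    exact ⟨hb1, b, hb2, rfl⟩
  · rintro ⟨hc, b, hb, rfl⟩
    exact ⟨b, ⟨hc, hb⟩, rfl⟩

theorem strict_trans (hG : IsTorsionClass G) {M : Type} [AddCommGroup M] [Module R M]
    {A : Submodule R M} (hA : IsStrictSub G A) {A' : Submodule R ↥A}
    (hA' : IsStrictSub G A') : IsStrictSub G (A'.map A.subtype) := by
  constructor
  · exact mem_congr hG (Submodule.equivMapOfInjective A.subtype A.injective_subtype A') hA'.1
  · intro B' hB'
    have hcomap : Mem G ↥(Submodule.comap A.subtype B') := by
      refine mem_congr hG ?_ (hA.2 B' hB')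
      exact ((Submodule.equivMapOfInjective A.subtype A.injective_subtype _).trans
        (LinearEquiv.ofEq _ _ (Submodule.map_comap_subtype _ _))).symm
    have h := hA'.2 _ hcomap
    have heq : (A' ⊓ Submodule.comap A.subtype B').map A.subtype = A'.map A.subtype ⊓ B' := by
      rw [Submodule.map_inf _ A.injective_subtype, Submodule.map_comap_subtype,
        ← inf_assoc, inf_eq_left.mpr (Submodule.map_subtype_le A A')]
    rw [← heq]
    exact mem_congr hG (Submodule.equivMapOfInjective A.subtype A.injective_subtype _) h

theorem strict_comap_inj (hG : IsTorsionClass G) {A B : Type} [AddCommGroup A] [Module R A]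
    [AddCommGroup B] [Module R B] (f : A →ₗ[R] B) (hf : Function.Injective f)
    (hR : Mem G ↥(LinearMap.range f)) {B' : Submodule R B} (hB' : IsStrictSub G B') :
    IsStrictSub G (B'.comap f) := by
  constructor
  · have : Mem G ↥((B'.comap f).map f) := by
      rw [Submodule.map_comap_eq]
      exact mem_congr hG (LinearEquiv.ofEq _ _ (inf_comm _ _)) (hB'.2 _ hR)
    exact mem_congr hG (Submodule.equivMapOfInjective f hf _).symm this
  · intro D hD
    have hmapD : Mem G ↥(D.map f) := mem_congr hG (Submodule.equivMapOfInjective f hf D) hD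
    have h := hB'.2 _ hmapD
    have : Mem G ↥((B'.comap f ⊓ D).map f) := by
      rw [map_inf_comap]
      exact h
    exact mem_congr hG (Submodule.equivMapOfInjective f hf _).symm this

theorem strict_map_surj (hG : IsTorsionClass G) {B C : Type} [AddCommGroup B] [Module R B]
    [AddCommGroup C] [Module R C] (g : B →ₗ[R] C) (hg : Function.Surjective g)
    (hker : Mem G ↥(LinearMap.ker g)) {B' : Submodule R B} (hB' : IsStrictSub G B') :
    IsStrictSub G (B'.map g) := by
  constructor
  · exact mem_map hG g B' hB'.1
  · intro D hD
    have hle : LinearMap.ker g ≤ Submodule.comap g D := fun x hx => by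
      simp only [Submodule.mem_comap, LinearMap.mem_ker.mp hx, Submodule.zero_mem]
    have hcom : Mem G ↥(Submodule.comap g D) := by
      refine mem_of_inf_ker hG g _ ?_ ?_
      · rw [inf_eq_right.mpr hle]
        exact hker
      · rw [Submodule.map_comap_eq_of_surjective hg]
        exact hD
    have h := hB'.2 _ hcom
    have : Mem G ↥((Submodule.comap g D ⊓ B').map g) := by
      rw [inf_comm]
      exact mem_map hG g _ h
    rw [map_inf_comap] at this
    exact mem_congr hG (LinearEquiv.ofEq _ _ (inf_comm _ _)) this

theorem strict_comap_surj (hG : IsTorsionClass G) {B C : Type} [AddCommGroup B] [Module R B]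
    [AddCommGroup C] [Module R C] (π : B →ₗ[R] C) (hπ : Function.Surjective π)
    (hker : IsStrictSub G (LinearMap.ker π)) {A' : Submodule R C}
    (hA' : IsStrictSub G A') : IsStrictSub G (A'.comap π) := by
  have hle : LinearMap.ker π ≤ Submodule.comap π A' := fun x hx => by
    simp only [Submodule.mem_comap, LinearMap.mem_ker.mp hx, Submodule.zero_mem]
  constructor
  · refine mem_of_inf_ker hG π _ ?_ ?_
    · rw [inf_eq_right.mpr hle]
      exact hker.1
    · rw [Submodule.map_comap_eq_of_surjective hπ]
      exact hA'.1
  · intro B' hB'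
    refine mem_of_inf_ker hG π _ ?_ ?_
    · have heq : (A'.comap π ⊓ B') ⊓ LinearMap.ker π = LinearMap.ker π ⊓ B' := by
        rw [inf_right_comm, inf_eq_right.mpr hle, inf_comm (LinearMap.ker π) B', inf_comm]
      rw [heq]
      exact hker.2 B' hB'
    · rw [map_inf_comap]
      exact hA'.2 _ (mem_map hG π B' hB')

theorem memW_ext (hG : IsTorsionClass G)
    (hfin : ∀ M : ModuleCat.{0} R, G M → Module.Finite R ↥M)
    {A B C : Type} [AddCommGroup A] [Module R A] [AddCommGroup B] [Module R B]
    [AddCommGroup C] [Module R C] (f : A →ₗ[R] B) (g : B →ₗ[R] C)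
    (hf : Function.Injective f) (hg : Function.Surjective g)
    (hfg : LinearMap.range f = LinearMap.ker g) (hA : memW G θ A) (hC : memW G θ C) :
    memW G θ B := by
  have hMemB : Mem G B := hG.ext_closed A B C f g hf hg hfg hA.1 hC.1
  have finB : Module.Finite R B := hfin (ModuleCat.of R B) hMemB
  have eA : A ≃ₗ[R] ↥(LinearMap.ker g) :=
    (LinearEquiv.ofInjective f hf).trans (LinearEquiv.ofEq _ _ hfg)
  have eC : (B ⧸ LinearMap.ker g) ≃ₗ[R] C :=
    (LinearMap.quotKerEquivRange g).trans (LinearEquiv.ofTop _ (LinearMap.range_eq_top.mpr hg))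
  have hker0 : θ.app ↥(LinearMap.ker g) = 0 := by
    rw [← app_congr θ eA]
    exact hA.2.1
  have hRmem : Mem G ↥(LinearMap.ker g) := mem_congr hG eA hA.1
  have hB0 : θ.app B = 0 := by
    have h := app_add θ (LinearMap.ker g)
    rw [app_congr θ eC] at h
    rw [hC.2.1] at h
    linarith
  refine ⟨hMemB, hB0, ?_⟩
  intro B' hB'
  have finB' : Module.Finite R ↥B' := hfin (ModuleCat.of R ↥B') hB'.1
  have h1 : θ.app ↥(B' ⊓ LinearMap.ker g) ≤ 0 := by
    have hstrict : IsStrictSub G (Submodule.comap f B') :=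
      strict_comap_inj hG f hf (mem_congr hG (LinearEquiv.ofInjective f hf) hA.1) hB'
    have hle := hA.2.2 _ hstrict
    have e2 : ↥(Submodule.comap f B') ≃ₗ[R] ↥(B' ⊓ LinearMap.ker g) :=
      (Submodule.equivMapOfInjective f hf _).trans
        (LinearEquiv.ofEq _ _ (by rw [Submodule.map_comap_eq, hfg, inf_comm]))
    rw [← app_congr θ e2]
    exact hle
  have h2 : θ.app ↥(B'.map g) ≤ 0 := by
    refine hC.2.2 _ (strict_map_surj hG g hg hRmem hB')
  have h3 := app_restrict θ g B'
  linarith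

end AuxHelpers

theorem statement_12 (k : Type) [Field k] [Algebra k R] [FiniteDimensional k R]
    (G : ModuleCat.{0} R → Prop) (hG : IsTorsionClass G)
    (hfin : ∀ M : ModuleCat.{0} R, G M → Module.Finite R ↥M)
    (θ : StabilityCondition R) :
    IsPseudoWide G (fun M : ModuleCat.{0} R => memW G θ ↥M) ∧
    (∀ (A B C : Type) [AddCommGroup A] [Module R A] [AddCommGroup B] [Module R B]
      [AddCommGroup C] [Module R C] (f : A →ₗ[R] B) (g : B →ₗ[R] C),
      Function.Injective f → Function.Surjective g →
      LinearMap.range f = LinearMap.ker g →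
      memW G θ A → memW G θ C → memW G θ B) := by
  have Wext : ∀ (A B C : Type) [AddCommGroup A] [Module R A] [AddCommGroup B] [Module R B]
      [AddCommGroup C] [Module R C] (f : A →ₗ[R] B) (g : B →ₗ[R] C),
      Function.Injective f → Function.Surjective g →
      LinearMap.range f = LinearMap.ker g →
      memW G θ A → memW G θ C → memW G θ B := by
    intro A B C _ _ _ _ _ _ f g hf hg hfg hA hC
    exact memW_ext θ hG hfin f g hf hg hfg hA hC
  refine ⟨⟨fun M h => h.1, ?_, ?_, ?_⟩, Wext⟩
  · -- zero objects
    intro M _ _ hsub hM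
    show memW G θ M
    refine ⟨hM, app_subsingleton θ, fun A' _ => ?_⟩
    have : Subsingleton ↥A' := by infer_instance
    rw [app_subsingleton θ]
  · -- kernels, images, cokernels
    intro A B _ _ _ _ hA hB f hstrict
    replace hA : memW G θ A := hA
    replace hB : memW G θ B := hB
    obtain ⟨hker, hrange⟩ := hstrict
    have finA : Module.Finite R A := hfin (ModuleCat.of R A) hA.1
    have finB : Module.Finite R B := hfin (ModuleCat.of R B) hB.1
    have h0 := app_ker_range θ f
    rw [hA.2.1] at h0
    have hk := hA.2.2 _ hker
    have hr := hB.2.2 _ hrange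
    have hker0 : θ.app ↥(LinearMap.ker f) = 0 := by linarith
    have hrange0 : θ.app ↥(LinearMap.range f) = 0 := by linarith
    have subker : ∀ A' : Submodule R ↥(LinearMap.ker f), IsStrictSub G A' →
        θ.app ↥A' ≤ 0 := by
      intro A' hA'
      have h := hA.2.2 _ (strict_trans hG hker hA')
      rw [app_congr θ (Submodule.equivMapOfInjective (LinearMap.ker f).subtype
        (LinearMap.ker f).injective_subtype A')]
      exact h
    have subrange : ∀ A' : Submodule R ↥(LinearMap.range f), IsStrictSub G A' →
        θ.app ↥A' ≤ 0 := by
      intro A' hA'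
      have h := hB.2.2 _ (strict_trans hG hrange hA')
      rw [app_congr θ (Submodule.equivMapOfInjective (LinearMap.range f).subtype
        (LinearMap.range f).injective_subtype A')]
      exact h
    refine ⟨⟨hker.1, hker0, subker⟩, ⟨hrange.1, hrange0, subrange⟩, ?_⟩
    -- cokernel
    show memW G θ (B ⧸ LinearMap.range f)
    have hcokmem : Mem G (B ⧸ (LinearMap.range f)) := hG.quot_closed B (LinearMap.range f) hB.1
    have hadd := app_add θ (LinearMap.range f)
    rw [hB.2.1, hrange0] at hadd
    refine ⟨hcokmem, by linarith, ?_⟩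
    intro A' hA'
    have hkerQ : IsStrictSub G (LinearMap.ker (LinearMap.range f).mkQ) := by
      rw [Submodule.ker_mkQ]
      exact hrange
    have hX : IsStrictSub G (A'.comap (LinearMap.range f).mkQ) :=
      strict_comap_surj hG (LinearMap.range f).mkQ (Submodule.mkQ_surjective (LinearMap.range f)) hkerQ hA'
    have finX : Module.Finite R ↥(A'.comap (LinearMap.range f).mkQ) :=
      hfin (ModuleCat.of R ↥(A'.comap (LinearMap.range f).mkQ)) hX.1
    have hres := app_restrict θ (LinearMap.range f).mkQ (A'.comap (LinearMap.range f).mkQ)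
    have hle : (LinearMap.range f) ≤ A'.comap (LinearMap.range f).mkQ := by
      intro x hx
      have hx0 : (LinearMap.range f).mkQ x = 0 := by
        rw [Submodule.mkQ_apply, Submodule.Quotient.mk_eq_zero]
        exact hx
      simp only [Submodule.mem_comap, hx0, Submodule.zero_mem]
    have heq1 : A'.comap (LinearMap.range f).mkQ ⊓ LinearMap.ker (LinearMap.range f).mkQ = (LinearMap.range f) := by
      rw [Submodule.ker_mkQ]
      exact inf_eq_right.mpr hle
    have heq2 : (A'.comap (LinearMap.range f).mkQ).map (LinearMap.range f).mkQ = A' :=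
      Submodule.map_comap_eq_of_surjective (Submodule.mkQ_surjective (LinearMap.range f)) A'
    rw [heq1, heq2, hrange0] at hres
    have := hB.2.2 _ hX
    linarith
  · intro A B C _ _ _ _ _ _ f g hf hg hfg _ hA hC
    exact Wext A B C f g hf hg hfg hA hC

end PaperTC
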